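/- arXiv:2203.11003 — 7 statements merged into one kernel-verified Lean document; each statement's English description precedes it below -/
import Mathlib

section
/- Let X be a W-space, C ⊆ X convex, T : C → C, u ∈ C, and (βₙ), (λₙ) sequences in [0,1]. Define the Tikhonov-Mann iteration x₀ ∈ C, uₙ = (1−βₙ)u + βₙxₙ, x_{n+1} = (1−λₙ)uₙ + λₙT(uₙ), and the modified Halpern iteration y₀ ∈ C, vₙ = (1−λₙ)yₙ + λₙT(yₙ), y_{n+1} = (1−β_{n+1})u + β_{n+1}vₙ. If y₀ = (1−β₀)u + β₀x₀, then for all n ∈ ℕ, uₙ = yₙ and x_{n+1} = vₙ. -/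
theorem tikhonovMann_eq_modifiedHalpern_general {X : Type*}
    (W : X → X → ℝ → X)
    (T : X → X)
    (u : X)
    (β lam : ℕ → ℝ)
    (x y uu v : ℕ → X)
    (huu : ∀ n, uu n = W u (x n) (β n))
    (hxrec : ∀ n, x (n + 1) = W (uu n) (T (uu n)) (lam n))
    (hv : ∀ n, v n = W (y n) (T (y n)) (lam n))
    (hyrec : ∀ n, y (n + 1) = W u (v n) (β (n + 1)))
    (hy0 : y 0 = W u (x 0) (β 0)) :
    ∀ n : ℕ, uu n = y n ∧ x (n + 1) = v n := by
  have step : ∀ n, uu n = y n → x (n + 1) = v n := fun n h => by rw [hxrec, hv, h]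
  have huu_eq : ∀ n, uu n = y n := by
    intro n
    induction n with
    | zero => rw [huu, hy0]
    | succ n ih => rw [huu, hyrec, step n ih]
  exact fun n => ⟨huu_eq n, step n (huu_eq n)⟩

/-- Linking proposition: if y₀ = (1−β₀)u + β₀x₀, then uₙ = yₙ and x_{n+1} = vₙ
for all n, where (xₙ) is the Tikhonov-Mann and (yₙ) the modified Halpern iteration. -/
theorem tikhonovMann_eq_modifiedHalpern {X : Type*} [MetricSpace X]
    (W : X → X → ℝ → X) (C : Set X)
    (hC : ∀ x ∈ C, ∀ y ∈ C, ∀ l ∈ Set.Icc (0:ℝ) 1, W x y l ∈ C)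
    (T : X → X) (hT : ∀ x ∈ C, T x ∈ C)
    (u : X) (hu : u ∈ C)
    (β lam : ℕ → ℝ) (hβ : ∀ n, β n ∈ Set.Icc (0:ℝ) 1)
    (hlam : ∀ n, lam n ∈ Set.Icc (0:ℝ) 1)
    (x y uu v : ℕ → X) (hx0 : x 0 ∈ C)
    (huu : ∀ n, uu n = W u (x n) (β n))
    (hxrec : ∀ n, x (n + 1) = W (uu n) (T (uu n)) (lam n))
    (hv : ∀ n, v n = W (y n) (T (y n)) (lam n))
    (hyrec : ∀ n, y (n + 1) = W u (v n) (β (n + 1)))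
    (hy0 : y 0 = W u (x 0) (β 0)) :
    ∀ n : ℕ, uu n = y n ∧ x (n + 1) = v n :=
  tikhonovMann_eq_modifiedHalpern_general W T u β lam x y uu v huu hxrec hv hyrec hy0
end

section
/- Let (aₙ)_{n≥1} be a sequence of non-negative reals with a₁ ≤ L for some L > 0, and set bₙ = min{2/n, 1}. Suppose for all n ≥ 1, a_{n+1} ≤ (1 − b_{n+1})aₙ + (bₙ − b_{n+1})cₙ, where (cₙ) is a sequence of reals with cₙ ≤ L for all n ≥ 1. Then aₙ ≤ 2L/n for all n ≥ 1. -/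
/-!
Induction on the stronger bound `aₙ ≤ bₙ L`. Feeding `aₙ ≤ bₙ L` and `cₙ ≤ L` into the
recursion gives
`a_{n+1} ≤ (1 - b_{n+1}) bₙ L + (bₙ - b_{n+1}) L = b_{n+1} L - (b_{n+1} (2 + bₙ) - 2 bₙ) L`,
and `b_{n+1} (2 + bₙ) ≥ 2 bₙ`: for `n ≥ 2` this is the equality `1 / b_{n+1} = 1 / bₙ + 1 / 2`
of `bₙ = 2 / n`, and for `n = 1` it reads `3 ≥ 2`.
-/

noncomputable def stepSize (n : ℕ) : ℝ := min (2 / n) 1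

lemma stepSize_le_one (n : ℕ) : stepSize n ≤ 1 := min_le_right _ _

lemma stepSize_succ_le {n : ℕ} (hn : 1 ≤ n) : stepSize (n + 1) ≤ stepSize n := by
  have hn' : (1 : ℝ) ≤ n := by exact_mod_cast hn
  unfold stepSize
  gcongr
  linarith

lemma stepSize_eq_of_two_le {n : ℕ} (hn : 2 ≤ n) : stepSize n = 2 / n := by
  have hn' : (2 : ℝ) ≤ n := by exact_mod_cast hn
  exact min_eq_left ((div_le_one (by linarith)).2 hn')

lemma two_mul_stepSize_le_stepSize_succ_mul {n : ℕ} (hn : 1 ≤ n) :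
    2 * stepSize n ≤ stepSize (n + 1) * (2 + stepSize n) := by
  obtain rfl | hn2 := hn.eq_or_lt
  · norm_num [stepSize]
  · rw [stepSize_eq_of_two_le hn2, stepSize_eq_of_two_le (by omega)]
    have hn' : (0 : ℝ) < n := by exact_mod_cast hn
    push_cast
    field_simp
    linarith

lemma stepSize_mul_le {L : ℝ} (hL : 0 ≤ L) (n : ℕ) : stepSize n * L ≤ 2 * L / n := by
  rw [mul_comm 2 L, mul_div_assoc, mul_comm L]
  exact mul_le_mul_of_nonneg_right (min_le_left _ _) hL

lemma le_mul_of_relaxation_step {x y c L b b' : ℝ} (hL : 0 ≤ L) (hb' : b' ≤ 1)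
    (hb'b : b' ≤ b) (hstep : 2 * b ≤ b' * (2 + b)) (hx : x ≤ b * L) (hc : c ≤ L)
    (hy : y ≤ (1 - b') * x + (b - b') * c) : y ≤ b' * L :=
  calc y ≤ (1 - b') * x + (b - b') * c := hy
    _ ≤ (1 - b') * (b * L) + (b - b') * L := by gcongr
    _ ≤ b' * L := by linarith [mul_le_mul_of_nonneg_right hstep hL]

lemma le_stepSize_mul {L : ℝ} {a c : ℕ → ℝ} (hL : 0 ≤ L) (ha1 : a 1 ≤ L)
    (hc : ∀ n, 1 ≤ n → c n ≤ L) (hrec : ∀ n, 1 ≤ n →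
      a (n + 1) ≤ (1 - stepSize (n + 1)) * a n + (stepSize n - stepSize (n + 1)) * c n) :
    ∀ n, 1 ≤ n → a n ≤ stepSize n * L := by
  intro n hn
  induction n, hn using Nat.le_induction with
  | base => simpa [stepSize] using ha1
  | succ n hn ih =>
    exact le_mul_of_relaxation_step hL (stepSize_le_one _) (stepSize_succ_le hn)
      (two_mul_stepSize_le_stepSize_succ_mul hn) ih (hc n hn) (hrec n hn)

theorem sabach_shtern_lemma_general (L : ℝ) (hL : 0 < L) (a c : ℕ → ℝ)
    (ha1 : a 1 ≤ L)
    (hc : ∀ n, 1 ≤ n → c n ≤ L)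
    (hrec : ∀ n, 1 ≤ n →
      a (n + 1) ≤ (1 - min (2 / (n + 1 : ℝ)) 1) * a n +
        (min (2 / (n : ℝ)) 1 - min (2 / (n + 1 : ℝ)) 1) * c n) :
    ∀ n, 1 ≤ n → a n ≤ 2 * L / n := by
  have hrec' : ∀ n, 1 ≤ n →
      a (n + 1) ≤ (1 - stepSize (n + 1)) * a n + (stepSize n - stepSize (n + 1)) * c n := by
    intro n hn
    simpa [stepSize] using hrec n hn
  intro n hn
  exact (le_stepSize_mul hL.le ha1 hc hrec' n hn).trans (stepSize_mul_le hL.le n)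

/-- Sabach–Shtern Lemma 3: if a₁ ≤ L, bₙ = min{2/n, 1}, cₙ ≤ L, and
a_{n+1} ≤ (1−b_{n+1})aₙ + (bₙ−b_{n+1})cₙ for all n ≥ 1, then aₙ ≤ 2L/n. -/
theorem sabach_shtern_lemma (L : ℝ) (hL : 0 < L) (a c : ℕ → ℝ)
    (ha_nonneg : ∀ n, 1 ≤ n → 0 ≤ a n) (ha1 : a 1 ≤ L)
    (hc : ∀ n, 1 ≤ n → c n ≤ L)
    (hrec : ∀ n, 1 ≤ n →
      a (n + 1) ≤ (1 - min (2 / (n + 1 : ℝ)) 1) * a n +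
        (min (2 / (n : ℝ)) 1 - min (2 / (n + 1 : ℝ)) 1) * c n) :
    ∀ n, 1 ≤ n → a n ≤ 2 * L / n :=
  sabach_shtern_lemma_general L hL a c ha1 hc hrec
end

section
/- Let X be a W-hyperbolic space, C ⊆ X convex, T : C → C nonexpansive with a fixed point p, u, y₀ ∈ C, λ ∈ (0,1], β₁ = 0 and βₙ = 1 − 2/n for n ≥ 2. Define the modified Halpern iteration y_{n+1} = (1−β_{n+1})u + β_{n+1}((1−λ)yₙ + λT(yₙ)). If M ∈ ℕ, M ≥ 1, and M ≥ 4·max{d(u,p), d(y₀,p)}, then for all n ≥ 0: d(y_{n+1}, yₙ) ≤ 2M/(n+1) and d(yₙ, T yₙ) ≤ 4M/(λ(n+1)). -/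
/-!
Write `zₙ = (1 - λ) yₙ + λ T yₙ`, so that `yₙ₊₁ = (1 - βₙ₊₁) u + βₙ₊₁ zₙ`. By (W1) and
nonexpansiveness every `yₙ` and `zₙ` stays within `M / 4` of the fixed point `p`, hence
`d(u, zₙ) ≤ M / 2`. By (W2) and (W4), `aₙ = d(yₙ₊₁, yₙ)` satisfies
`aₙ₊₁ ≤ |βₙ₊₂ - βₙ₊₁| M / 2 + βₙ₊₁ aₙ`, and for `βₙ = 1 - 2 / n` this recursion propagates the
bound `aₙ ≤ 2M / (n + 1)`. Finally `λ d(yₙ, T yₙ) = d(yₙ, zₙ) ≤ aₙ + (1 - βₙ₊₁) d(u, zₙ)`.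
-/

open Set

namespace WHyperbolic

variable {X : Type*} [MetricSpace X]

def W1 (W : X → X → ℝ → X) : Prop :=
  ∀ x y z : X, ∀ l ∈ Icc (0:ℝ) 1, dist z (W x y l) ≤ (1 - l) * dist z x + l * dist z y

def W2 (W : X → X → ℝ → X) : Prop :=
  ∀ x y : X, ∀ l ∈ Icc (0:ℝ) 1, ∀ m ∈ Icc (0:ℝ) 1, dist (W x y l) (W x y m) = |l - m| * dist x y

def W4 (W : X → X → ℝ → X) : Prop :=
  ∀ x y z w : X, ∀ l ∈ Icc (0:ℝ) 1,
    dist (W x z l) (W y w l) ≤ (1 - l) * dist x y + l * dist z w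

variable {W : X → X → ℝ → X} {l : ℝ}

theorem W_zero (h1 : W1 W) (x y : X) : W x y 0 = x := by
  simpa [eq_comm] using h1 x y x 0 ⟨le_rfl, zero_le_one⟩

theorem W_one (h1 : W1 W) (x y : X) : W x y 1 = y := by
  simpa [eq_comm] using h1 x y y 1 ⟨zero_le_one, le_rfl⟩

theorem dist_W_le_max (h1 : W1 W) (x y z : X) (hl : l ∈ Icc (0:ℝ) 1) :
    dist z (W x y l) ≤ max (dist z x) (dist z y) :=
  (h1 x y z l hl).trans <| Convex.combo_le_max _ _ (sub_nonneg.2 hl.2) hl.1 (by ring)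

theorem dist_W_W_le_max (h4 : W4 W) (x y z w : X) (hl : l ∈ Icc (0:ℝ) 1) :
    dist (W x z l) (W y w l) ≤ max (dist x y) (dist z w) :=
  (h4 x y z w l hl).trans <| Convex.combo_le_max _ _ (sub_nonneg.2 hl.2) hl.1 (by ring)

theorem dist_W_left (h1 : W1 W) (h2 : W2 W) (x y : X) (hl : l ∈ Icc (0:ℝ) 1) :
    dist x (W x y l) = l * dist x y := by
  have h := h2 x y 0 ⟨le_rfl, zero_le_one⟩ l hl
  rwa [W_zero h1, zero_sub, abs_neg, abs_of_nonneg hl.1] at h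

theorem dist_W_right (h1 : W1 W) (h2 : W2 W) (x y : X) (hl : l ∈ Icc (0:ℝ) 1) :
    dist (W x y l) y = (1 - l) * dist x y := by
  have h := h2 x y l hl 1 ⟨zero_le_one, le_rfl⟩
  rwa [W_one h1, abs_sub_comm, abs_of_nonneg (sub_nonneg.2 hl.2)] at h

theorem dist_W_W_le (h2 : W2 W) (h4 : W4 W) {u a b : X} {s t R D : ℝ}
    (hs : s ∈ Icc (0:ℝ) 1) (ht : t ∈ Icc (0:ℝ) 1) (hR : dist u a ≤ R) (hD : dist a b ≤ D) :
    dist (W u a s) (W u b t) ≤ |s - t| * R + t * D :=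
  calc dist (W u a s) (W u b t) ≤ dist (W u a s) (W u a t) + dist (W u a t) (W u b t) :=
        dist_triangle _ _ _
    _ ≤ |s - t| * dist u a + t * dist a b :=
        add_le_add (h2 u a s hs t ht).le (by simpa using h4 u u a b t ht)
    _ ≤ |s - t| * R + t * D := by gcongr; exact ht.1

theorem mul_dist_le_dist_W_add (h1 : W1 W) (h2 : W2 W) (x v u : X) {b : ℝ} (hl : l ∈ Icc (0:ℝ) 1)
    (hb : b ∈ Icc (0:ℝ) 1) :
    l * dist x v ≤ dist x (W u (W x v l) b) + (1 - b) * dist u (W x v l) := by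
  rw [← dist_W_left h1 h2 x v hl, ← dist_W_right h1 h2 u _ hb]
  exact dist_triangle _ _ _

end WHyperbolic

theorem le_max_of_forall_le_max_succ {α : Type*} [LinearOrder α] {a : ℕ → α} {c : α}
    (h : ∀ n, a (n + 1) ≤ max c (a n)) (n : ℕ) : a n ≤ max c (a 0) := by
  induction n with
  | zero => exact le_max_right _ _
  | succ n ih => exact (h n).trans (max_le (le_max_left _ _) ih)

section HalpernCoefficients

variable {β : ℕ → ℝ}

theorem one_sub_le_two_div_of_halpern (hβ1 : β 1 = 0) (hβn : ∀ n, 2 ≤ n → β n = 1 - 2 / (n : ℝ))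
    (n : ℕ) : 1 - β (n + 1) ≤ 2 / (n + 1) := by
  rcases n with _ | n
  · norm_num [hβ1]
  · rw [hβn _ (by omega)]
    push_cast
    linarith

theorem halpern_rate_step {k M : ℝ} (hk : 0 < k) (hM : 0 ≤ M) :
    (2 / k - 2 / (k + 1)) * (M / 2) + (1 - 2 / k) * (2 * M / k) ≤ 2 * M / (k + 1) := by
  have h : 2 * M / (k + 1) - ((2 / k - 2 / (k + 1)) * (M / 2) + (1 - 2 / k) * (2 * M / k))
      = M * (k + 4) / (k ^ 2 * (k + 1)) := by
    field_simp
    ring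
  have : 0 ≤ M * (k + 4) / (k ^ 2 * (k + 1)) := by positivity
  linarith

theorem le_two_mul_div_of_halpern_rec (hβ1 : β 1 = 0)
    (hβn : ∀ n, 2 ≤ n → β n = 1 - 2 / (n : ℝ)) {a : ℕ → ℝ} {M : ℝ} (hM : 0 ≤ M)
    (h0 : a 0 ≤ 2 * M)
    (hrec : ∀ n, a (n + 1) ≤ |β (n + 2) - β (n + 1)| * (M / 2) + β (n + 1) * a n) (n : ℕ) :
    a n ≤ 2 * M / (n + 1) := by
  induction n with
  | zero => simpa using h0
  | succ n ih =>
    rcases n with _ | n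
    · have hβ2 : β 2 = 0 := by norm_num [hβn 2 le_rfl]
      have := hrec 0
      norm_num [hβ1, hβ2] at this ⊢
      linarith
    · set k : ℝ := n + 2 with hk
      have hk0 : 0 < k := by positivity
      have hβk : β (n + 1 + 1) = 1 - 2 / k := by rw [hβn _ (by omega), hk]; push_cast; ring
      have hβk1 : β (n + 1 + 2) = 1 - 2 / (k + 1) := by
        rw [hβn _ (by omega), hk]; push_cast; ring
      have hdiff : |β (n + 1 + 2) - β (n + 1 + 1)| = 2 / k - 2 / (k + 1) := by
        rw [hβk, hβk1, abs_of_nonneg] <;>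
          [ring; linarith [div_le_div_of_nonneg_left zero_le_two hk0 (by linarith : k ≤ k + 1)]]
      have ih' : a (n + 1) ≤ 2 * M / k := by simpa [hk, add_assoc, one_add_one_eq_two] using ih
      have hβk0 : 0 ≤ 1 - 2 / k := by
        rw [sub_nonneg, div_le_one hk0]; linarith [(n.cast_nonneg : (0:ℝ) ≤ n)]
      calc a (n + 1 + 1) ≤ (2 / k - 2 / (k + 1)) * (M / 2) + (1 - 2 / k) * a (n + 1) := by
            rw [← hdiff, ← hβk]; exact hrec (n + 1)
        _ ≤ (2 / k - 2 / (k + 1)) * (M / 2) + (1 - 2 / k) * (2 * M / k) := by gcongr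
        _ ≤ 2 * M / (k + 1) := halpern_rate_step hk0 hM
        _ = 2 * M / ((n + 1 + 1 : ℕ) + 1) := by rw [hk]; push_cast; ring

end HalpernCoefficients

theorem modifiedHalpern_linear_rate_general {X : Type*} [MetricSpace X] (W : X → X → ℝ → X)
    (W1 : ∀ x y z : X, ∀ l ∈ Set.Icc (0:ℝ) 1,
      dist z (W x y l) ≤ (1 - l) * dist z x + l * dist z y)
    (W2 : ∀ x y : X, ∀ l ∈ Set.Icc (0:ℝ) 1, ∀ m ∈ Set.Icc (0:ℝ) 1,
      dist (W x y l) (W x y m) = |l - m| * dist x y)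
    (W4 : ∀ x y z w : X, ∀ l ∈ Set.Icc (0:ℝ) 1,
      dist (W x z l) (W y w l) ≤ (1 - l) * dist x y + l * dist z w)
    (C : Set X) (hC : ∀ x ∈ C, ∀ y ∈ C, ∀ l ∈ Set.Icc (0:ℝ) 1, W x y l ∈ C)
    (T : X → X) (hT : ∀ x ∈ C, T x ∈ C)
    (hTne : ∀ x ∈ C, ∀ y ∈ C, dist (T x) (T y) ≤ dist x y)
    (p : X) (hp : p ∈ C) (hfix : T p = p)
    (u y0 : X) (hu : u ∈ C) (hy0 : y0 ∈ C)
    (lam : ℝ) (hlam : 0 < lam ∧ lam ≤ 1)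
    (β : ℕ → ℝ) (hβ : ∀ n, β n ∈ Set.Icc (0:ℝ) 1)
    (hβ1 : β 1 = 0) (hβn : ∀ n, 2 ≤ n → β n = 1 - 2 / (n : ℝ))
    (y : ℕ → X) (hy0' : y 0 = y0)
    (hyrec : ∀ n, y (n + 1) = W u (W (y n) (T (y n)) lam) (β (n + 1)))
    (M : ℕ) (hM : 4 * max (dist u p) (dist y0 p) ≤ (M : ℝ)) :
    ∀ n : ℕ, dist (y (n + 1)) (y n) ≤ 2 * M / (n + 1) ∧
      dist (y n) (T (y n)) ≤ 4 * M / (lam * (n + 1)) := by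
  open WHyperbolic in
  have hl : lam ∈ Icc (0:ℝ) 1 := ⟨hlam.1.le, hlam.2⟩
  set z : ℕ → X := fun n => W (y n) (T (y n)) lam
  have hyz : ∀ n, y (n + 1) = W u (z n) (β (n + 1)) := hyrec
  have hyC : ∀ n, y n ∈ C := fun n => by
    induction n with
    | zero => exact hy0' ▸ hy0
    | succ n ih => rw [hyz]; exact hC u hu _ (hC _ ih _ (hT _ ih) lam hl) _ (hβ _)
  have hzp : ∀ n, dist p (z n) ≤ dist p (y n) := fun n => (dist_W_le_max W1 _ _ _ hl).trans
    (max_le le_rfl (by simpa only [hfix] using hTne p hp _ (hyC n)))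
  have hR : max (dist p u) (dist p (y 0)) ≤ M / 4 := by
    rw [dist_comm p u, dist_comm p, hy0']; linarith
  have hyp : ∀ n, dist p (y n) ≤ M / 4 := fun n =>
    (le_max_of_forall_le_max_succ (a := fun n => dist p (y n)) (fun n =>
      hyz n ▸ (dist_W_le_max W1 _ _ _ (hβ _)).trans (max_le_max le_rfl (hzp n))) n).trans hR
  have huz : ∀ n, dist u (z n) ≤ M / 2 := fun n => by
    linarith [dist_triangle_left u (z n) p, hzp n, hyp n, le_max_left (dist p u) (dist p (y 0))]
  have hzz : ∀ n, dist (z (n + 1)) (z n) ≤ dist (y (n + 1)) (y n) := fun n =>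
    (dist_W_W_le_max W4 _ _ _ _ hl).trans (max_le le_rfl (hTne _ (hyC _) _ (hyC _)))
  have hrate : ∀ n : ℕ, dist (y (n + 1)) (y n) ≤ 2 * M / (n + 1) := by
    refine le_two_mul_div_of_halpern_rec hβ1 hβn M.cast_nonneg ?_ fun n => ?_
    · rw [hyz, hβ1, W_zero W1]
      linarith [dist_triangle_left u (y 0) p, le_max_left (dist p u) (dist p (y 0)),
        le_max_right (dist p u) (dist p (y 0))]
    · exact (congrArg₂ dist (hyz _) (hyz _)).trans_le
        (dist_W_W_le W2 W4 (hβ _) (hβ _) (huz _) (hzz n))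
  intro n
  refine ⟨hrate n, ?_⟩
  have key : lam * dist (y n) (T (y n)) ≤ 3 * M / (n + 1) :=
    calc lam * dist (y n) (T (y n))
        ≤ dist (y n) (y (n + 1)) + (1 - β (n + 1)) * dist u (z n) := by
          rw [hyz n]; exact mul_dist_le_dist_W_add W1 W2 _ _ _ hl (hβ _)
      _ ≤ 2 * M / (n + 1) + 2 / (n + 1) * (M / 2) :=
          add_le_add (dist_comm (y n) _ ▸ hrate n) (mul_le_mul
            (one_sub_le_two_div_of_halpern hβ1 hβn n) (huz n) dist_nonneg (by positivity))
      _ = 3 * M / (n + 1) := by ring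
  rw [le_div_iff₀ (mul_pos hlam.1 n.cast_add_one_pos)]
  have := (le_div_iff₀ n.cast_add_one_pos).1 key
  nlinarith [M.cast_nonneg (α := ℝ)]

/-- Linear rates of asymptotic regularity for the modified Halpern iteration with
λₙ = λ, β₁ = 0, βₙ = 1 − 2/n (n ≥ 2), in W-hyperbolic spaces. -/
theorem modifiedHalpern_linear_rate {X : Type*} [MetricSpace X] (W : X → X → ℝ → X)
    (W1 : ∀ x y z : X, ∀ l ∈ Set.Icc (0:ℝ) 1,
      dist z (W x y l) ≤ (1 - l) * dist z x + l * dist z y)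
    (W2 : ∀ x y : X, ∀ l ∈ Set.Icc (0:ℝ) 1, ∀ m ∈ Set.Icc (0:ℝ) 1,
      dist (W x y l) (W x y m) = |l - m| * dist x y)
    (W3 : ∀ x y : X, ∀ l ∈ Set.Icc (0:ℝ) 1, W x y l = W y x (1 - l))
    (W4 : ∀ x y z w : X, ∀ l ∈ Set.Icc (0:ℝ) 1,
      dist (W x z l) (W y w l) ≤ (1 - l) * dist x y + l * dist z w)
    (C : Set X) (hC : ∀ x ∈ C, ∀ y ∈ C, ∀ l ∈ Set.Icc (0:ℝ) 1, W x y l ∈ C)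
    (T : X → X) (hT : ∀ x ∈ C, T x ∈ C)
    (hTne : ∀ x ∈ C, ∀ y ∈ C, dist (T x) (T y) ≤ dist x y)
    (p : X) (hp : p ∈ C) (hfix : T p = p)
    (u y0 : X) (hu : u ∈ C) (hy0 : y0 ∈ C)
    (lam : ℝ) (hlam : 0 < lam ∧ lam ≤ 1)
    (β : ℕ → ℝ) (hβ : ∀ n, β n ∈ Set.Icc (0:ℝ) 1)
    (hβ1 : β 1 = 0) (hβn : ∀ n, 2 ≤ n → β n = 1 - 2 / (n : ℝ))
    (y : ℕ → X) (hy0' : y 0 = y0)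
    (hyrec : ∀ n, y (n + 1) = W u (W (y n) (T (y n)) lam) (β (n + 1)))
    (M : ℕ) (hM1 : 1 ≤ M) (hM : 4 * max (dist u p) (dist y0 p) ≤ (M : ℝ)) :
    ∀ n : ℕ, dist (y (n + 1)) (y n) ≤ 2 * M / (n + 1) ∧
      dist (y n) (T (y n)) ≤ 4 * M / (lam * (n + 1)) :=
  modifiedHalpern_linear_rate_general W W1 W2 W4 C hC T hT hTne p hp hfix u y0 hu hy0 lam hlam β hβ
    hβ1 hβn y hy0' hyrec M hM
end

section
/- Let (X,d) be a metric space, (xₙ), (uₙ) sequences in X, and α : ℕ → ℕ a rate of convergence of d(xₙ,uₙ) to 0. If Ω : ℕ × ℕ^ℕ → ℕ is a rate of metastability of (uₙ), then Ω'(k,g) := Ω(3k+2, g_q) + q with q := α(3k+2) and g_q(n) := g(n+q)+q is a rate of metastability of (xₙ); i.e., for all k ∈ ℕ and g : ℕ → ℕ there exists N ≤ Ω'(k,g) with d(xᵢ, xⱼ) ≤ 1/(k+1) for all i, j ∈ [N, N+g(N)]. -/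
/-! Shift the window that the metastability rate of `u` provides by `q = α (3k+2)`: on the
shifted window both `x i` and `x j` are `1/(3k+3)`-close to `u i` and `u j`, which are in turn
`1/(3k+3)`-close to each other, so `x i` and `x j` are `1/(k+1)`-close. -/

theorem dist_le_three_mul_of_dist_le {X : Type*} [PseudoMetricSpace X] {a b a' b' : X} {ε : ℝ}
    (ha : dist a a' ≤ ε) (hb : dist b b' ≤ ε) (hab : dist a' b' ≤ ε) : dist a b ≤ 3 * ε := by
  calc dist a b ≤ dist a a' + dist a' b' + dist b' b := dist_triangle4 a a' b' b
    _ ≤ 3 * ε := by rw [dist_comm b' b]; linarith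

theorem three_mul_one_div_three_mul_add_two_add_one (k : ℕ) :
    3 * (1 / (((3 * k + 2 : ℕ) : ℝ) + 1)) = 1 / ((k : ℝ) + 1) := by
  push_cast
  field_simp
  ring

/-- Transfer of rates of metastability: if d(xₙ,uₙ) → 0 with rate α and Ω is a rate
of metastability of (uₙ), then Ω'(k,g) = Ω(3k+2, g_q) + q, q = α(3k+2),
g_q(n) = g(n+q)+q, is a rate of metastability of (xₙ). -/
theorem transfer_metastability {X : Type*} [MetricSpace X] (x u : ℕ → X)
    (α : ℕ → ℕ) (hα : ∀ k n, α k ≤ n → dist (x n) (u n) ≤ 1 / (k + 1))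
    (Ω : ℕ → (ℕ → ℕ) → ℕ)
    (hΩ : ∀ (k : ℕ) (g : ℕ → ℕ), ∃ N ≤ Ω k g,
      ∀ i j, N ≤ i → i ≤ N + g N → N ≤ j → j ≤ N + g N →
        dist (u i) (u j) ≤ 1 / (k + 1)) :
    ∀ (k : ℕ) (g : ℕ → ℕ),
      ∃ N ≤ Ω (3 * k + 2) (fun n => g (n + α (3 * k + 2)) + α (3 * k + 2))
            + α (3 * k + 2),
        ∀ i j, N ≤ i → i ≤ N + g N → N ≤ j → j ≤ N + g N →
          dist (x i) (x j) ≤ 1 / (k + 1) := by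
  intro k g
  set q := α (3 * k + 2)
  obtain ⟨N, hN, hu⟩ := hΩ (3 * k + 2) (fun n => g (n + q) + q)
  refine ⟨N + q, by omega, fun i j hi hi' hj hj' => ?_⟩
  rw [← three_mul_one_div_three_mul_add_two_add_one]
  exact dist_le_three_mul_of_dist_le (hα _ i (by omega)) (hα _ j (by omega))
    (hu i j (by omega) (by omega) (by omega) (by omega))
end

section
/- Let X be a W-hyperbolic space, C ⊆ X convex, T : C → C nonexpansive with fixed point p, u, y₀ ∈ C, and (βₙ), (λₙ) sequences in [0,1]. Let (yₙ) be the modified Halpern iteration y_{n+1} = (1−β_{n+1})u + β_{n+1}((1−λₙ)yₙ + λₙT(yₙ)), and M ≥ 4·max{d(u,p), d(y₀,p)} with M ∈ ℕ*. Suppose Σ : ℕ → ℕ is a rate of asymptotic regularity of (yₙ), σ₄ is a rate of convergence of (βₙ) to 1, and Λ ∈ ℕ*, N_Λ ∈ ℕ are such that λₙ ≥ 1/Λ for all n ≥ N_Λ. Then Σ̂(k) := max{N_Λ, Σ(2Λ(k+1)−1), σ₄(2MΛ(k+1)−1)} is a rate of T-asymptotic regularity of (yₙ): for all k and all n ≥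 Σ̂(k), d(yₙ, Tyₙ) ≤ 1/(k+1). -/
/-!
Expanding `y (n+1)` by axiom (W1), first around `u` and then around `Tyₙ`, gives
`d(yₙ, Tyₙ) ≤ d(yₙ, yₙ₊₁) + (1 - βₙ₊₁) d(Tyₙ, u) + βₙ₊₁ (1 - λₙ) d(yₙ, Tyₙ)`, hence
`λₙ d(yₙ, Tyₙ) ≤ d(yₙ, yₙ₊₁) + (1 - βₙ₊₁) M`, because the iterates and their images under `T`
stay within `M / 4` of the fixed point `p`. Beyond `Σ̂(k)` both terms on the right are at most
`1 / (2Λ(k+1))`, while `λₙ ≥ 1 / Λ`.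
-/

namespace ModifiedHalpern

variable {X : Type*}

theorem iterate_mem {W : X → X → ℝ → X} {C : Set X} {T : X → X} {u : X} {β lam : ℕ → ℝ}
    {y : ℕ → X} (hC : ∀ x ∈ C, ∀ y ∈ C, ∀ l ∈ Set.Icc (0:ℝ) 1, W x y l ∈ C)
    (hT : ∀ x ∈ C, T x ∈ C) (hu : u ∈ C) (hβ : ∀ n, β n ∈ Set.Icc (0:ℝ) 1)
    (hlam : ∀ n, lam n ∈ Set.Icc (0:ℝ) 1) (hy0 : y 0 ∈ C)
    (hyrec : ∀ n, y (n + 1) = W u (W (y n) (T (y n)) (lam n)) (β (n + 1))) (n : ℕ) :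
    y n ∈ C := by
  induction n with
  | zero => exact hy0
  | succ n ih => rw [hyrec n]; exact hC u hu _ (hC _ ih _ (hT _ ih) _ (hlam n)) _ (hβ (n + 1))

variable [MetricSpace X]

def SatisfiesW1 (W : X → X → ℝ → X) : Prop :=
  ∀ x y z : X, ∀ l ∈ Set.Icc (0:ℝ) 1, dist z (W x y l) ≤ (1 - l) * dist z x + l * dist z y

section W1

variable {W : X → X → ℝ → X} {x y z : X} {l : ℝ}

theorem SatisfiesW1.dist_le_of_le (hW : SatisfiesW1 W) (hl : l ∈ Set.Icc (0:ℝ) 1) {K : ℝ}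
    (hx : dist z x ≤ K) (hy : dist z y ≤ K) : dist z (W x y l) ≤ K := by
  nlinarith [hW x y z l hl, hl.1, hl.2]

theorem SatisfiesW1.dist_right_le (hW : SatisfiesW1 W) (hl : l ∈ Set.Icc (0:ℝ) 1) :
    dist y (W x y l) ≤ (1 - l) * dist x y := by
  simpa [dist_comm y x] using hW x y y l hl

theorem SatisfiesW1.dist_apply_le (hW : SatisfiesW1 W) (T : X → X) (u : X) {β : ℝ}
    (hβ : β ∈ Set.Icc (0:ℝ) 1) (hl : l ∈ Set.Icc (0:ℝ) 1) :
    dist x (T x) ≤ dist x (W u (W x (T x) l) β) + (1 - β) * dist (T x) u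
      + β * (1 - l) * dist x (T x) := by
  set z := W x (T x) l
  have hz : dist (T x) z ≤ (1 - l) * dist x (T x) := hW.dist_right_le hl
  have hstep : dist (W u z β) (T x) ≤ (1 - β) * dist (T x) u + β * dist (T x) z := by
    rw [dist_comm]; exact hW u z (T x) β hβ
  calc dist x (T x) ≤ dist x (W u z β) + dist (W u z β) (T x) := dist_triangle _ _ _
    _ ≤ _ := by nlinarith [hβ.1]

theorem SatisfiesW1.mul_dist_apply_le (hW : SatisfiesW1 W) (T : X → X) (u : X) {β D : ℝ}
    (hβ : β ∈ Set.Icc (0:ℝ) 1) (hl : l ∈ Set.Icc (0:ℝ) 1) (hD : dist (T x) u ≤ D) :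
    l * dist x (T x) ≤ dist x (W u (W x (T x) l) β) + (1 - β) * D := by
  have hd : 0 ≤ dist x (T x) := dist_nonneg
  nlinarith [hW.dist_apply_le T u hβ hl (x := x), hβ.2, hl.2,
    mul_nonneg (sub_nonneg.2 hβ.2) (sub_nonneg.2 hD),
    mul_nonneg (mul_nonneg (sub_nonneg.2 hl.2) (sub_nonneg.2 hβ.2)) hd]

end W1

section Iteration

variable {W : X → X → ℝ → X} {C : Set X} {T : X → X} {p u : X} {β lam : ℕ → ℝ} {y : ℕ → X}

theorem dist_fixedPoint_apply_le (hTne : ∀ x ∈ C, ∀ y ∈ C, dist (T x) (T y) ≤ dist x y)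
    (hp : p ∈ C) (hfix : T p = p) {x : X} (hx : x ∈ C) : dist p (T x) ≤ dist p x := by
  simpa only [hfix] using hTne p hp x hx

theorem dist_iterate_le (hW : SatisfiesW1 W) (hTp : ∀ x ∈ C, dist p (T x) ≤ dist p x)
    (hβ : ∀ n, β n ∈ Set.Icc (0:ℝ) 1)
    (hlam : ∀ n, lam n ∈ Set.Icc (0:ℝ) 1) (hyC : ∀ n, y n ∈ C)
    (hyrec : ∀ n, y (n + 1) = W u (W (y n) (T (y n)) (lam n)) (β (n + 1))) (n : ℕ) :
    dist p (y n) ≤ max (dist p u) (dist p (y 0)) := by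
  induction n with
  | zero => exact le_max_right _ _
  | succ n ih =>
    have hTy : dist p (T (y n)) ≤ max (dist p u) (dist p (y 0)) :=
      (hTp _ (hyC n)).trans ih
    rw [hyrec n]
    exact hW.dist_le_of_le (hβ _) (le_max_left _ _) (hW.dist_le_of_le (hlam n) ih hTy)

theorem dist_apply_iterate_le (hW : SatisfiesW1 W) (hTp : ∀ x ∈ C, dist p (T x) ≤ dist p x)
    (hβ : ∀ n, β n ∈ Set.Icc (0:ℝ) 1) (hlam : ∀ n, lam n ∈ Set.Icc (0:ℝ) 1) (hyC : ∀ n, y n ∈ C)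
    (hyrec : ∀ n, y (n + 1) = W u (W (y n) (T (y n)) (lam n)) (β (n + 1))) (n : ℕ) :
    dist (T (y n)) u ≤ 2 * max (dist p u) (dist p (y 0)) := by
  have hTy := (hTp _ (hyC n)).trans (dist_iterate_le hW hTp hβ hlam hyC hyrec n)
  calc dist (T (y n)) u ≤ dist p (T (y n)) + dist p u := dist_triangle_left _ _ _
    _ ≤ 2 * max (dist p u) (dist p (y 0)) := by linarith [le_max_left (dist p u) (dist p (y 0))]

end Iteration

theorem le_one_div_of_rate {x : ℕ → ℝ} {σ : ℕ → ℕ} (h : ∀ k n, σ k ≤ n → x n ≤ 1 / (k + 1))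
    {m n : ℕ} (hm : 1 ≤ m) (hn : σ (m - 1) ≤ n) : x n ≤ 1 / (m : ℝ) := by
  simpa [Nat.cast_sub hm] using h (m - 1) n hn

theorem le_one_div_succ_of_mul_le_add {d a b lam : ℝ} {M Λ k : ℕ} (hd : 0 ≤ d) (hM : 1 ≤ M)
    (hΛ : 1 ≤ Λ) (hlam : 1 / (Λ : ℝ) ≤ lam) (h : lam * d ≤ a + b * M)
    (ha : a ≤ 1 / ((2 * Λ * (k + 1) : ℕ) : ℝ)) (hb : b ≤ 1 / ((2 * M * Λ * (k + 1) : ℕ) : ℝ)) :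
    d ≤ 1 / (k + 1) := by
  have hM0 : (0 : ℝ) < M := by exact_mod_cast hM
  have hΛ0 : (0 : ℝ) < Λ := by exact_mod_cast hΛ
  push_cast at ha hb
  have hbM : b * M ≤ 1 / (2 * Λ * (k + 1)) := by
    calc b * M ≤ 1 / (2 * M * Λ * (k + 1)) * M := by gcongr
      _ = 1 / (2 * Λ * (k + 1)) := by field_simp
  have hd' : d / Λ ≤ 1 / (k + 1) / Λ := by
    calc d / Λ = 1 / Λ * d := by ring
      _ ≤ lam * d := by gcongr
      _ ≤ 1 / (2 * Λ * (k + 1)) + 1 / (2 * Λ * (k + 1)) := by linarith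
      _ = 1 / (k + 1) / Λ := by field_simp; ring
  exact (div_le_div_iff_of_pos_right hΛ0).1 hd'

end ModifiedHalpern

open ModifiedHalpern in
theorem modifiedHalpern_T_asymptotic_regularity_general {X : Type*} [MetricSpace X]
    (W : X → X → ℝ → X)
    (W1 : ∀ x y z : X, ∀ l ∈ Set.Icc (0:ℝ) 1,
      dist z (W x y l) ≤ (1 - l) * dist z x + l * dist z y)
    (C : Set X) (hC : ∀ x ∈ C, ∀ y ∈ C, ∀ l ∈ Set.Icc (0:ℝ) 1, W x y l ∈ C)
    (T : X → X) (hT : ∀ x ∈ C, T x ∈ C)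
    (hTne : ∀ x ∈ C, ∀ y ∈ C, dist (T x) (T y) ≤ dist x y)
    (p : X) (hp : p ∈ C) (hfix : T p = p)
    (u y0 : X) (hu : u ∈ C) (hy0 : y0 ∈ C)
    (β lam : ℕ → ℝ) (hβ : ∀ n, β n ∈ Set.Icc (0:ℝ) 1)
    (hlam : ∀ n, lam n ∈ Set.Icc (0:ℝ) 1)
    (y : ℕ → X) (hy0' : y 0 = y0)
    (hyrec : ∀ n, y (n + 1) = W u (W (y n) (T (y n)) (lam n)) (β (n + 1)))
    (M : ℕ) (hM1 : 1 ≤ M) (hM : 4 * max (dist u p) (dist y0 p) ≤ (M : ℝ))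
    (Sig : ℕ → ℕ) (hSig : ∀ k n, Sig k ≤ n → dist (y n) (y (n + 1)) ≤ 1 / (k + 1))
    (σ₄ : ℕ → ℕ) (hσ₄ : ∀ k n, σ₄ k ≤ n → 1 - β n ≤ 1 / (k + 1))
    (Λ NΛ : ℕ) (hΛ1 : 1 ≤ Λ) (hΛ : ∀ n, NΛ ≤ n → 1 / (Λ : ℝ) ≤ lam n) :
    ∀ k n, max (max NΛ (Sig (2 * Λ * (k + 1) - 1))) (σ₄ (2 * M * Λ * (k + 1) - 1)) ≤ n →
      dist (y n) (T (y n)) ≤ 1 / (k + 1) := by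
  have hW : SatisfiesW1 W := W1
  have hyC := iterate_mem hC hT hu hβ hlam (hy0' ▸ hy0) hyrec
  have hTp (x : X) (hx : x ∈ C) := dist_fixedPoint_apply_le hTne hp hfix hx
  have hTyu (n : ℕ) : dist (T (y n)) u ≤ M := by
    have := dist_apply_iterate_le hW hTp hβ hlam hyC hyrec n
    rw [hy0', dist_comm p u, dist_comm p y0] at this
    linarith [le_max_left (dist u p) (dist y0 p), dist_nonneg (x := u) (y := p)]
  intro k n hn
  simp only [max_le_iff] at hn
  obtain ⟨⟨hNΛ, hSign⟩, hσn⟩ := hn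
  have hstep : lam n * dist (y n) (T (y n)) ≤ dist (y n) (y (n + 1)) + (1 - β (n + 1)) * M := by
    rw [hyrec n]; exact hW.mul_dist_apply_le T u (hβ (n + 1)) (hlam n) (hTyu n)
  exact le_one_div_succ_of_mul_le_add dist_nonneg hM1 hΛ1 (hΛ n hNΛ) hstep
    (le_one_div_of_rate hSig (Nat.mul_pos (Nat.mul_pos two_pos hΛ1) k.succ_pos) hSign)
    (le_one_div_of_rate hσ₄ (Nat.mul_pos (Nat.mul_pos (Nat.mul_pos two_pos hM1) hΛ1) k.succ_pos)
      (hσn.trans n.le_succ))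

/-- From a rate of asymptotic regularity Σ of the modified Halpern iteration (yₙ),
a rate of convergence σ₄ of (βₙ) to 1, and λₙ ≥ 1/Λ for n ≥ N_Λ, one gets the rate
Σ̂(k) = max{N_Λ, Σ(2Λ(k+1)−1), σ₄(2MΛ(k+1)−1)} of T-asymptotic regularity of (yₙ). -/
theorem modifiedHalpern_T_asymptotic_regularity {X : Type*} [MetricSpace X]
    (W : X → X → ℝ → X)
    (W1 : ∀ x y z : X, ∀ l ∈ Set.Icc (0:ℝ) 1,
      dist z (W x y l) ≤ (1 - l) * dist z x + l * dist z y)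
    (W2 : ∀ x y : X, ∀ l ∈ Set.Icc (0:ℝ) 1, ∀ m ∈ Set.Icc (0:ℝ) 1,
      dist (W x y l) (W x y m) = |l - m| * dist x y)
    (W3 : ∀ x y : X, ∀ l ∈ Set.Icc (0:ℝ) 1, W x y l = W y x (1 - l))
    (W4 : ∀ x y z w : X, ∀ l ∈ Set.Icc (0:ℝ) 1,
      dist (W x z l) (W y w l) ≤ (1 - l) * dist x y + l * dist z w)
    (C : Set X) (hC : ∀ x ∈ C, ∀ y ∈ C, ∀ l ∈ Set.Icc (0:ℝ) 1, W x y l ∈ C)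
    (T : X → X) (hT : ∀ x ∈ C, T x ∈ C)
    (hTne : ∀ x ∈ C, ∀ y ∈ C, dist (T x) (T y) ≤ dist x y)
    (p : X) (hp : p ∈ C) (hfix : T p = p)
    (u y0 : X) (hu : u ∈ C) (hy0 : y0 ∈ C)
    (β lam : ℕ → ℝ) (hβ : ∀ n, β n ∈ Set.Icc (0:ℝ) 1)
    (hlam : ∀ n, lam n ∈ Set.Icc (0:ℝ) 1)
    (y : ℕ → X) (hy0' : y 0 = y0)
    (hyrec : ∀ n, y (n + 1) = W u (W (y n) (T (y n)) (lam n)) (β (n + 1)))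
    (M : ℕ) (hM1 : 1 ≤ M) (hM : 4 * max (dist u p) (dist y0 p) ≤ (M : ℝ))
    (Sig : ℕ → ℕ) (hSig : ∀ k n, Sig k ≤ n → dist (y n) (y (n + 1)) ≤ 1 / (k + 1))
    (σ₄ : ℕ → ℕ) (hσ₄ : ∀ k n, σ₄ k ≤ n → 1 - β n ≤ 1 / (k + 1))
    (Λ NΛ : ℕ) (hΛ1 : 1 ≤ Λ) (hΛ : ∀ n, NΛ ≤ n → 1 / (Λ : ℝ) ≤ lam n) :
    ∀ k n, max (max NΛ (Sig (2 * Λ * (k + 1) - 1))) (σ₄ (2 * M * Λ * (k + 1) - 1)) ≤ n →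
      dist (y n) (T (y n)) ≤ 1 / (k + 1) :=
  modifiedHalpern_T_asymptotic_regularity_general W W1 C hC T hT hTne p hp hfix u y0 hu hy0 β lam hβ
    hlam y hy0' hyrec M hM1 hM Sig hSig σ₄ hσ₄ Λ NΛ hΛ1 hΛ
end

section
/- Let X be a W-hyperbolic space, C ⊆ X convex, T : C → C nonexpansive, u ∈ C, (βₙ), (λₙ) sequences in [0,1], and (yₙ) the modified Halpern iteration y_{n+1} = (1−β_{n+1})u + β_{n+1}((1−λₙ)yₙ + λₙT(yₙ)). Then for all n ≥ 1: d(y_{n+1}, yₙ) ≤ β_{n+1}(d(yₙ, y_{n−1}) + |λₙ − λ_{n−1}|·d(y_{n−1}, T y_{n−1})) + |β_{n+1} − βₙ|·cₙ, where cₙ = (1−λ_{n−1})d(u, y_{n−1}) + λ_{n−1}d(u, T y_{n−1}). -/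
/-!
Both `yₙ₊₁` and `yₙ` are Halpern steps `W u · β` from the same anchor `u`, applied to the
Krasnoselskii–Mann points `zₖ = W yₖ (T yₖ) λₖ`. Passing through `W u zₙ₋₁ βₙ₊₁` splits their
distance into a part controlled by (W4), where the anchors cancel, and a part controlled by (W2),
where only the parameter changes. The same splitting of `d(zₙ, zₙ₋₁)`, together with
nonexpansiveness of `T`, gives the first summand, and (W1) bounds `d(u, zₙ₋₁)` by `cₙ`.
-/

section WHyperbolic

variable {X : Type*} [MetricSpace X] {W : X → X → ℝ → X}

theorem dist_W_le_of_W2_W4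
    (W2 : ∀ x y : X, ∀ l ∈ Set.Icc (0:ℝ) 1, ∀ m ∈ Set.Icc (0:ℝ) 1,
      dist (W x y l) (W x y m) = |l - m| * dist x y)
    (W4 : ∀ x y z w : X, ∀ l ∈ Set.Icc (0:ℝ) 1,
      dist (W x z l) (W y w l) ≤ (1 - l) * dist x y + l * dist z w)
    {x y z w : X} {l m : ℝ} (hl : l ∈ Set.Icc (0:ℝ) 1) (hm : m ∈ Set.Icc (0:ℝ) 1) :
    dist (W x z l) (W y w m) ≤ (1 - l) * dist x y + l * dist z w + |l - m| * dist y w :=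
  calc dist (W x z l) (W y w m) ≤ dist (W x z l) (W y w l) + dist (W y w l) (W y w m) :=
        dist_triangle _ _ _
    _ ≤ _ := by
        rw [W2 y w l hl m hm]
        gcongr
        exact W4 x y z w l hl

theorem dist_W_anchor_le
    (W2 : ∀ x y : X, ∀ l ∈ Set.Icc (0:ℝ) 1, ∀ m ∈ Set.Icc (0:ℝ) 1,
      dist (W x y l) (W x y m) = |l - m| * dist x y)
    (W4 : ∀ x y z w : X, ∀ l ∈ Set.Icc (0:ℝ) 1,
      dist (W x z l) (W y w l) ≤ (1 - l) * dist x y + l * dist z w)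
    (u : X) {z w : X} {l m : ℝ} (hl : l ∈ Set.Icc (0:ℝ) 1) (hm : m ∈ Set.Icc (0:ℝ) 1) :
    dist (W u z l) (W u w m) ≤ l * dist z w + |l - m| * dist u w := by
  simpa using dist_W_le_of_W2_W4 (x := u) (y := u) (z := z) (w := w) W2 W4 hl hm

theorem dist_W_self_map_le
    (W2 : ∀ x y : X, ∀ l ∈ Set.Icc (0:ℝ) 1, ∀ m ∈ Set.Icc (0:ℝ) 1,
      dist (W x y l) (W x y m) = |l - m| * dist x y)
    (W4 : ∀ x y z w : X, ∀ l ∈ Set.Icc (0:ℝ) 1,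
      dist (W x z l) (W y w l) ≤ (1 - l) * dist x y + l * dist z w)
    {T : X → X} {x y : X} (hT : dist (T x) (T y) ≤ dist x y)
    {l m : ℝ} (hl : l ∈ Set.Icc (0:ℝ) 1) (hm : m ∈ Set.Icc (0:ℝ) 1) :
    dist (W x (T x) l) (W y (T y) m) ≤ dist x y + |l - m| * dist y (T y) :=
  calc dist (W x (T x) l) (W y (T y) m)
      ≤ (1 - l) * dist x y + l * dist (T x) (T y) + |l - m| * dist y (T y) :=
        dist_W_le_of_W2_W4 W2 W4 hl hm
    _ ≤ (1 - l) * dist x y + l * dist x y + |l - m| * dist y (T y) := by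
        gcongr
        exact hl.1
    _ = dist x y + |l - m| * dist y (T y) := by ring

end WHyperbolic

theorem modifiedHalpern_consecutive_estimate_general {X : Type*} [MetricSpace X]
    (W : X → X → ℝ → X)
    (W1 : ∀ x y z : X, ∀ l ∈ Set.Icc (0:ℝ) 1,
      dist z (W x y l) ≤ (1 - l) * dist z x + l * dist z y)
    (W2 : ∀ x y : X, ∀ l ∈ Set.Icc (0:ℝ) 1, ∀ m ∈ Set.Icc (0:ℝ) 1,
      dist (W x y l) (W x y m) = |l - m| * dist x y)
    (W4 : ∀ x y z w : X, ∀ l ∈ Set.Icc (0:ℝ) 1,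
      dist (W x z l) (W y w l) ≤ (1 - l) * dist x y + l * dist z w)
    (C : Set X) (hC : ∀ x ∈ C, ∀ y ∈ C, ∀ l ∈ Set.Icc (0:ℝ) 1, W x y l ∈ C)
    (T : X → X) (hT : ∀ x ∈ C, T x ∈ C)
    (hTne : ∀ x ∈ C, ∀ y ∈ C, dist (T x) (T y) ≤ dist x y)
    (u : X) (hu : u ∈ C)
    (β lam : ℕ → ℝ) (hβ : ∀ n, β n ∈ Set.Icc (0:ℝ) 1)
    (hlam : ∀ n, lam n ∈ Set.Icc (0:ℝ) 1)
    (y : ℕ → X) (hy0 : y 0 ∈ C)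
    (hyrec : ∀ n, y (n + 1) = W u (W (y n) (T (y n)) (lam n)) (β (n + 1))) :
    ∀ n : ℕ, 1 ≤ n →
      dist (y (n + 1)) (y n) ≤
        β (n + 1) * (dist (y n) (y (n - 1)) +
          |lam n - lam (n - 1)| * dist (y (n - 1)) (T (y (n - 1)))) +
        |β (n + 1) - β n| *
          ((1 - lam (n - 1)) * dist u (y (n - 1)) +
            lam (n - 1) * dist u (T (y (n - 1)))) := by
  have hyC : ∀ n, y n ∈ C := by
    intro n
    induction n with
    | zero => exact hy0
    | succ k ih =>
      rw [hyrec k]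
      exact hC u hu _ (hC _ ih _ (hT _ ih) _ (hlam k)) _ (hβ (k + 1))
  intro n hn
  obtain ⟨m, rfl⟩ := Nat.exists_eq_add_of_le' hn
  simp only [Nat.add_sub_cancel]
  have hstep := dist_W_anchor_le W2 W4 u (z := W (y (m + 1)) (T (y (m + 1))) (lam (m + 1)))
    (w := W (y m) (T (y m)) (lam m)) (hβ (m + 1 + 1)) (hβ (m + 1))
  rw [← hyrec m, ← hyrec (m + 1)] at hstep
  have hinner := dist_W_self_map_le W2 W4 (hTne _ (hyC (m + 1)) _ (hyC m))
    (hlam (m + 1)) (hlam m)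
  have hanchor := W1 (y m) (T (y m)) u (lam m) (hlam m)
  refine hstep.trans (add_le_add ?_ ?_)
  · exact mul_le_mul_of_nonneg_left hinner (hβ _).1
  · exact mul_le_mul_of_nonneg_left hanchor (abs_nonneg _)

/-- Recursive estimate for consecutive terms of the modified Halpern iteration. -/
theorem modifiedHalpern_consecutive_estimate {X : Type*} [MetricSpace X]
    (W : X → X → ℝ → X)
    (W1 : ∀ x y z : X, ∀ l ∈ Set.Icc (0:ℝ) 1,
      dist z (W x y l) ≤ (1 - l) * dist z x + l * dist z y)
    (W2 : ∀ x y : X, ∀ l ∈ Set.Icc (0:ℝ) 1, ∀ m ∈ Set.Icc (0:ℝ) 1,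
      dist (W x y l) (W x y m) = |l - m| * dist x y)
    (W3 : ∀ x y : X, ∀ l ∈ Set.Icc (0:ℝ) 1, W x y l = W y x (1 - l))
    (W4 : ∀ x y z w : X, ∀ l ∈ Set.Icc (0:ℝ) 1,
      dist (W x z l) (W y w l) ≤ (1 - l) * dist x y + l * dist z w)
    (C : Set X) (hC : ∀ x ∈ C, ∀ y ∈ C, ∀ l ∈ Set.Icc (0:ℝ) 1, W x y l ∈ C)
    (T : X → X) (hT : ∀ x ∈ C, T x ∈ C)
    (hTne : ∀ x ∈ C, ∀ y ∈ C, dist (T x) (T y) ≤ dist x y)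
    (u : X) (hu : u ∈ C)
    (β lam : ℕ → ℝ) (hβ : ∀ n, β n ∈ Set.Icc (0:ℝ) 1)
    (hlam : ∀ n, lam n ∈ Set.Icc (0:ℝ) 1)
    (y : ℕ → X) (hy0 : y 0 ∈ C)
    (hyrec : ∀ n, y (n + 1) = W u (W (y n) (T (y n)) (lam n)) (β (n + 1))) :
    ∀ n : ℕ, 1 ≤ n →
      dist (y (n + 1)) (y n) ≤
        β (n + 1) * (dist (y n) (y (n - 1)) +
          |lam n - lam (n - 1)| * dist (y (n - 1)) (T (y (n - 1)))) +
        |β (n + 1) - β n| *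
          ((1 - lam (n - 1)) * dist u (y (n - 1)) +
            lam (n - 1) * dist u (T (y (n - 1)))) :=
  modifiedHalpern_consecutive_estimate_general W W1 W2 W4 C hC T hT hTne u hu β lam hβ hlam y hy0
    hyrec
end

section
/- Let X be a W-hyperbolic space, C ⊆ X convex, T : C → C nonexpansive with fixed point p, u, x₀ ∈ C, λ ∈ (0,1], β₁ = 0 and βₙ = 1 − 2/n for n ≥ 2. Let (xₙ) be the Tikhonov-Mann iteration with these scalars and y₀ := (1−β₀)u + β₀x₀, (yₙ) the corresponding modified Halpern iteration. If K ∈ ℕ*, K ≥ max{d(x₀,p), d(u,p)}, then for all n ≥ 1: d(xₙ, yₙ) ≤ 4K/n. -/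
/-!
The modified Halpern iterate `yₙ` coincides with the anchored point `uₙ = W(u, xₙ, βₙ)` of the
Tikhonov-Mann iteration, so `d(xₙ, yₙ) = d(xₙ, W(u, xₙ, βₙ)) ≤ (1 - βₙ) d(xₙ, u)` by (W1).
Convex combinations of points within `K` of `p` stay within `K` of `p` (by (W4), since
`W(p, p, l) = p`), and so does `T z` for `z ∈ C` because `T` is nonexpansive and fixes `p`;
hence every `xₙ` lies within `K` of `p`, `d(xₙ, u) ≤ 2K`, and `1 - βₙ ≤ 2/n` gives `4K/n`.
-/

open Set

section WHyperbolic

variable {X : Type*} [MetricSpace X] {W : X → X → ℝ → X}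

theorem W_self (W1 : ∀ x y z : X, ∀ l ∈ Icc (0:ℝ) 1,
      dist z (W x y l) ≤ (1 - l) * dist z x + l * dist z y)
    (p : X) {l : ℝ} (hl : l ∈ Icc (0:ℝ) 1) : W p p l = p :=
  (dist_le_zero.1 (by simpa using W1 p p p l hl)).symm

theorem dist_W_right_le (W1 : ∀ x y z : X, ∀ l ∈ Icc (0:ℝ) 1,
      dist z (W x y l) ≤ (1 - l) * dist z x + l * dist z y)
    (u z : X) {l : ℝ} (hl : l ∈ Icc (0:ℝ) 1) : dist z (W u z l) ≤ (1 - l) * dist z u := by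
  simpa using W1 u z z l hl

theorem dist_W_le_of_le (W1 : ∀ x y z : X, ∀ l ∈ Icc (0:ℝ) 1,
      dist z (W x y l) ≤ (1 - l) * dist z x + l * dist z y)
    (W4 : ∀ x y z w : X, ∀ l ∈ Icc (0:ℝ) 1,
      dist (W x z l) (W y w l) ≤ (1 - l) * dist x y + l * dist z w)
    {x y p : X} {l r : ℝ} (hl : l ∈ Icc (0:ℝ) 1) (hx : dist x p ≤ r) (hy : dist y p ≤ r) :
    dist (W x y l) p ≤ r := by
  obtain ⟨hl0, hl1⟩ := hl
  calc dist (W x y l) p = dist (W x y l) (W p p l) := by rw [W_self W1 p ⟨hl0, hl1⟩]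
    _ ≤ (1 - l) * dist x p + l * dist y p := W4 x p y p l ⟨hl0, hl1⟩
    _ ≤ (1 - l) * r + l * r := by gcongr
    _ = r := by ring

theorem dist_W_apply_le (W1 : ∀ x y z : X, ∀ l ∈ Icc (0:ℝ) 1,
      dist z (W x y l) ≤ (1 - l) * dist z x + l * dist z y)
    (W4 : ∀ x y z w : X, ∀ l ∈ Icc (0:ℝ) 1,
      dist (W x z l) (W y w l) ≤ (1 - l) * dist x y + l * dist z w)
    {C : Set X} {T : X → X} (hTne : ∀ x ∈ C, ∀ y ∈ C, dist (T x) (T y) ≤ dist x y)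
    {p z : X} (hp : p ∈ C) (hfix : T p = p) (hz : z ∈ C) {l : ℝ} (hl : l ∈ Icc (0:ℝ) 1) :
    dist (W z (T z) l) p ≤ dist z p :=
  dist_W_le_of_le W1 W4 hl le_rfl (by simpa [hfix] using hTne z hz p hp)

theorem tikhonovMann_mem_and_dist_le (W1 : ∀ x y z : X, ∀ l ∈ Icc (0:ℝ) 1,
      dist z (W x y l) ≤ (1 - l) * dist z x + l * dist z y)
    (W4 : ∀ x y z w : X, ∀ l ∈ Icc (0:ℝ) 1,
      dist (W x z l) (W y w l) ≤ (1 - l) * dist x y + l * dist z w)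
    {C : Set X} (hC : ∀ x ∈ C, ∀ y ∈ C, ∀ l ∈ Icc (0:ℝ) 1, W x y l ∈ C)
    {T : X → X} (hT : ∀ x ∈ C, T x ∈ C)
    (hTne : ∀ x ∈ C, ∀ y ∈ C, dist (T x) (T y) ≤ dist x y)
    {p u : X} (hp : p ∈ C) (hfix : T p = p) (hu : u ∈ C)
    {lam : ℝ} (hlam : lam ∈ Icc (0:ℝ) 1) {β : ℕ → ℝ} (hβ : ∀ n, β n ∈ Icc (0:ℝ) 1)
    {x uu : ℕ → X} (huu : ∀ n, uu n = W u (x n) (β n))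
    (hxrec : ∀ n, x (n + 1) = W (uu n) (T (uu n)) lam)
    {r : ℝ} (hx0 : x 0 ∈ C) (hx0r : dist (x 0) p ≤ r) (hur : dist u p ≤ r) :
    ∀ n, x n ∈ C ∧ dist (x n) p ≤ r := by
  intro n
  induction n with
  | zero => exact ⟨hx0, hx0r⟩
  | succ n ih =>
    have huuC : uu n ∈ C := huu n ▸ hC u hu _ ih.1 _ (hβ n)
    have huur : dist (uu n) p ≤ r := huu n ▸ dist_W_le_of_le W1 W4 (hβ n) hur ih.2
    rw [hxrec n]
    exact ⟨hC _ huuC _ (hT _ huuC) _ hlam,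
      (dist_W_apply_le W1 W4 hTne hp hfix huuC hlam).trans huur⟩

end WHyperbolic

theorem modifiedHalpern_eq_tikhonovMann {X : Type*} {W : X → X → ℝ → X} {T : X → X} {u : X}
    {lam : ℝ} {β : ℕ → ℝ} {x uu y : ℕ → X} (huu : ∀ n, uu n = W u (x n) (β n))
    (hxrec : ∀ n, x (n + 1) = W (uu n) (T (uu n)) lam)
    (hy0 : y 0 = W u (x 0) (β 0))
    (hyrec : ∀ n, y (n + 1) = W u (W (y n) (T (y n)) lam) (β (n + 1))) :
    ∀ n, y n = uu n := by
  intro n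
  induction n with
  | zero => rw [hy0, huu 0]
  | succ n ih => rw [hyrec n, huu (n + 1), hxrec n, ih]

theorem one_sub_le_two_div {β : ℕ → ℝ} (hβ1 : β 1 = 0)
    (hβn : ∀ n, 2 ≤ n → β n = 1 - 2 / (n : ℝ)) {n : ℕ} (hn : 1 ≤ n) :
    1 - β n ≤ 2 / n := by
  obtain rfl | hn2 := hn.eq_or_lt
  · norm_num [hβ1]
  · rw [hβn n hn2, sub_sub_cancel]

theorem tikhonovMann_modifiedHalpern_distance_general {X : Type*} [MetricSpace X]
    (W : X → X → ℝ → X)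
    (W1 : ∀ x y z : X, ∀ l ∈ Set.Icc (0:ℝ) 1,
      dist z (W x y l) ≤ (1 - l) * dist z x + l * dist z y)
    (W4 : ∀ x y z w : X, ∀ l ∈ Set.Icc (0:ℝ) 1,
      dist (W x z l) (W y w l) ≤ (1 - l) * dist x y + l * dist z w)
    (C : Set X) (hC : ∀ x ∈ C, ∀ y ∈ C, ∀ l ∈ Set.Icc (0:ℝ) 1, W x y l ∈ C)
    (T : X → X) (hT : ∀ x ∈ C, T x ∈ C)
    (hTne : ∀ x ∈ C, ∀ y ∈ C, dist (T x) (T y) ≤ dist x y)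
    (p : X) (hp : p ∈ C) (hfix : T p = p)
    (u x0 : X) (hu : u ∈ C) (hx0 : x0 ∈ C)
    (lam : ℝ) (hlam : 0 < lam ∧ lam ≤ 1)
    (β : ℕ → ℝ) (hβ : ∀ n, β n ∈ Set.Icc (0:ℝ) 1)
    (hβ1 : β 1 = 0) (hβn : ∀ n, 2 ≤ n → β n = 1 - 2 / (n : ℝ))
    (x uu y : ℕ → X) (hx0' : x 0 = x0)
    (huu : ∀ n, uu n = W u (x n) (β n))
    (hxrec : ∀ n, x (n + 1) = W (uu n) (T (uu n)) lam)
    (hy0 : y 0 = W u (x 0) (β 0))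
    (hyrec : ∀ n, y (n + 1) = W u (W (y n) (T (y n)) lam) (β (n + 1)))
    (K : ℕ) (hK : max (dist x0 p) (dist u p) ≤ (K : ℝ)) :
    ∀ n : ℕ, 1 ≤ n → dist (x n) (y n) ≤ 4 * K / n := by
  intro n hn
  obtain ⟨hx0K, huK⟩ := max_le_iff.1 hK
  subst hx0'
  have hxK := (tikhonovMann_mem_and_dist_le W1 W4 hC hT hTne hp hfix hu ⟨hlam.1.le, hlam.2⟩ hβ
    huu hxrec hx0 hx0K huK n).2
  have hxu : dist (x n) u ≤ 2 * K := by
    linarith [dist_triangle_right (x n) u p]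
  rw [modifiedHalpern_eq_tikhonovMann huu hxrec hy0 hyrec n, huu n]
  calc dist (x n) (W u (x n) (β n)) ≤ (1 - β n) * dist (x n) u := dist_W_right_le W1 u _ (hβ n)
    _ ≤ 2 / n * (2 * K) := by gcongr; exact one_sub_le_two_div hβ1 hβn hn
    _ = 4 * K / n := by ring

/-- With λₙ = λ, β₁ = 0, βₙ = 1 − 2/n (n ≥ 2), and y₀ = (1−β₀)u + β₀x₀, the
Tikhonov-Mann iteration (xₙ) and the corresponding modified Halpern iteration (yₙ)
satisfy d(xₙ, yₙ) ≤ 4K/n for n ≥ 1. -/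
theorem tikhonovMann_modifiedHalpern_distance {X : Type*} [MetricSpace X]
    (W : X → X → ℝ → X)
    (W1 : ∀ x y z : X, ∀ l ∈ Set.Icc (0:ℝ) 1,
      dist z (W x y l) ≤ (1 - l) * dist z x + l * dist z y)
    (W2 : ∀ x y : X, ∀ l ∈ Set.Icc (0:ℝ) 1, ∀ m ∈ Set.Icc (0:ℝ) 1,
      dist (W x y l) (W x y m) = |l - m| * dist x y)
    (W3 : ∀ x y : X, ∀ l ∈ Set.Icc (0:ℝ) 1, W x y l = W y x (1 - l))
    (W4 : ∀ x y z w : X, ∀ l ∈ Set.Icc (0:ℝ) 1,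
      dist (W x z l) (W y w l) ≤ (1 - l) * dist x y + l * dist z w)
    (C : Set X) (hC : ∀ x ∈ C, ∀ y ∈ C, ∀ l ∈ Set.Icc (0:ℝ) 1, W x y l ∈ C)
    (T : X → X) (hT : ∀ x ∈ C, T x ∈ C)
    (hTne : ∀ x ∈ C, ∀ y ∈ C, dist (T x) (T y) ≤ dist x y)
    (p : X) (hp : p ∈ C) (hfix : T p = p)
    (u x0 : X) (hu : u ∈ C) (hx0 : x0 ∈ C)
    (lam : ℝ) (hlam : 0 < lam ∧ lam ≤ 1)
    (β : ℕ → ℝ) (hβ : ∀ n, β n ∈ Set.Icc (0:ℝ) 1)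
    (hβ1 : β 1 = 0) (hβn : ∀ n, 2 ≤ n → β n = 1 - 2 / (n : ℝ))
    (x uu y : ℕ → X) (hx0' : x 0 = x0)
    (huu : ∀ n, uu n = W u (x n) (β n))
    (hxrec : ∀ n, x (n + 1) = W (uu n) (T (uu n)) lam)
    (hy0 : y 0 = W u (x 0) (β 0))
    (hyrec : ∀ n, y (n + 1) = W u (W (y n) (T (y n)) lam) (β (n + 1)))
    (K : ℕ) (hK1 : 1 ≤ K) (hK : max (dist x0 p) (dist u p) ≤ (K : ℝ)) :
    ∀ n : ℕ, 1 ≤ n → dist (x n) (y n) ≤ 4 * K / n :=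
  tikhonovMann_modifiedHalpern_distance_general W W1 W4 C hC T hT hTne p hp hfix u x0 hu hx0 lam
    hlam β hβ hβ1 hβn x uu y hx0' huu hxrec hy0 hyrec K hK
end
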